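/- arXiv:math/0407515 — 2 statements merged into one kernel-verified Lean document; each statement's English description precedes it below -/
import Mathlib

section
/- For each prime p, if the embeddings (A_{λ,μ} ⊆ B), for (λ,μ) ∈ {0,…,p−1}², are pairwise nonisomorphic as subgroup embeddings, then the groups G(A_{λ,μ} ⊆ B) form a family of at least p² pairwise nonisomorphic metabelian groups of order p^{41}. -/
namespace Metabelian

variable {B : Type*} [AddCommGroup B]

/-- The subgroup `A` of `B` is bounded by `n`, i.e. `n • a = 0` for all `a ∈ A`. -/
class BoundedSub (A : AddSubgroup B) (n : ℕ) : Prop where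
  bound : ∀ a : A, n • (a : B) = 0

lemma val_smul_eq {n : ℕ} (a : B) (h : n • a = 0) (x : ℕ) : (x % n) • a = x • a := by
  conv_rhs => rw [← Nat.mod_add_div x n]
  rw [add_nsmul, mul_nsmul, h, smul_zero, add_zero]

/-- Birkhoff's construction `G(A ⊆ B) = (A ⊕ B) ⋊_ψ D` with `D = ℤ/n` where `n` bounds `A`:
the underlying set is `A × B × ℤ/n` and the (multiplicatively written) group operation is
`(a,b,d)·(a',b',d') = (a+a', b + d·ι(a') + b', d+d')`. -/
instance mgroup (A : AddSubgroup B) (n : ℕ) [NeZero n] [BoundedSub A n] :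
    Group (A × B × ZMod n) where
  mul x y := (x.1 + y.1, x.2.1 + x.2.2.val • (y.1 : B) + y.2.1, x.2.2 + y.2.2)
  one := (0, 0, 0)
  inv x := (-x.1, -x.2.1 + x.2.2.val • (x.1 : B), -x.2.2)
  mul_assoc x y z := by
    have hb := BoundedSub.bound (A := A) (n := n)
    refine Prod.ext (add_assoc _ _ _) (Prod.ext ?_ (add_assoc _ _ _))
    show x.2.1 + x.2.2.val • (y.1 : B) + y.2.1 + (x.2.2 + y.2.2).val • (z.1 : B) + z.2.1
        = x.2.1 + x.2.2.val • ((y.1 + z.1 : A) : B) + (y.2.1 + y.2.2.val • (z.1 : B) + z.2.1)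
    rw [ZMod.val_add, val_smul_eq _ (hb z.1), AddSubgroup.coe_add, smul_add, add_nsmul]
    abel
  one_mul x := by
    refine Prod.ext (zero_add _) (Prod.ext ?_ (zero_add _))
    show (0 : B) + (0 : ZMod n).val • (x.1 : B) + x.2.1 = x.2.1
    simp
  mul_one x := by
    refine Prod.ext (add_zero _) (Prod.ext ?_ (add_zero _))
    show x.2.1 + x.2.2.val • ((0 : A) : B) + 0 = x.2.1
    simp
  inv_mul_cancel x := by
    have hb := BoundedSub.bound (A := A) (n := n)
    refine Prod.ext (neg_add_cancel _) (Prod.ext ?_ (neg_add_cancel _))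
    show -x.2.1 + x.2.2.val • (x.1 : B) + (-x.2.2).val • (x.1 : B) + x.2.1 = 0
    have h2 : ((-x.2.2).val + x.2.2.val) % n = 0 := by
      rw [← ZMod.val_add, neg_add_cancel, ZMod.val_zero]
    have h3 : x.2.2.val • (x.1 : B) + (-x.2.2).val • (x.1 : B) = 0 := by
      rw [add_comm, ← add_nsmul, ← val_smul_eq _ (hb x.1), h2, zero_nsmul]
    rw [add_assoc, add_assoc, ← add_assoc (x.2.2.val • (x.1 : B)), h3, zero_add, neg_add_cancel]

/-! The two-parameter example: `B = ℤ/p⁷ ⊕ ℤ/p⁶ ⊕ ℤ/p⁴ ⊕ ℤ/p⁴ ⊕ ℤ/p² ⊕ ℤ/p²` with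
generators `x₁, x₂, y₁, y₂, z₁, z₂` and
`A_{λ,μ} = ⟨p³x₁+py₁+py₂+z₂, p²x₂+pλy₁+p(μ+1)y₂+λz₁+μz₂, p²y₁+pz₁, p²y₂+pz₂⟩`. -/

abbrev Bd (p : ℕ) :=
  ZMod (p ^ 7) × ZMod (p ^ 6) × ZMod (p ^ 4) × ZMod (p ^ 4) × ZMod (p ^ 2) × ZMod (p ^ 2)

def x1gen (p : ℕ) : Bd p := (1, 0, 0, 0, 0, 0)
def x2gen (p : ℕ) : Bd p := (0, 1, 0, 0, 0, 0)
def y1gen (p : ℕ) : Bd p := (0, 0, 1, 0, 0, 0)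
def y2gen (p : ℕ) : Bd p := (0, 0, 0, 1, 0, 0)
def z1gen (p : ℕ) : Bd p := (0, 0, 0, 0, 1, 0)
def z2gen (p : ℕ) : Bd p := (0, 0, 0, 0, 0, 1)

/-- `u₁ = p³x₁ + py₁ + py₂ + z₂`. -/
def u1gen (p : ℕ) : Bd p := p ^ 3 • x1gen p + p • y1gen p + p • y2gen p + z2gen p

/-- `u₂ = p²x₂ + pλy₁ + p(μ+1)y₂ + λz₁ + μz₂`. -/
def u2gen (p l mu : ℕ) : Bd p :=
  p ^ 2 • x2gen p + (p * l) • y1gen p + (p * (mu + 1)) • y2gen p + l • z1gen p + mu • z2gen p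

/-- `v₁ = p²y₁ + pz₁`. -/
def v1gen (p : ℕ) : Bd p := p ^ 2 • y1gen p + p • z1gen p

/-- `v₂ = p²y₂ + pz₂`. -/
def v2gen (p : ℕ) : Bd p := p ^ 2 • y2gen p + p • z2gen p

/-- `A_{λ,μ}`. -/
def A2sub (p l mu : ℕ) : AddSubgroup (Bd p) :=
  AddSubgroup.closure {u1gen p, u2gen p l mu, v1gen p, v2gen p}

section
set_option linter.unusedSectionVars false
variable (p : ℕ) [Fact p.Prime]

lemma smul_x1 (k : ℕ) (h : p ^ 7 ∣ k) : k • x1gen p = 0 := by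
  simp [x1gen, Prod.smul_mk, nsmul_eq_mul, (ZMod.natCast_eq_zero_iff _ _).mpr h,
    Prod.ext_iff]
lemma smul_x2 (k : ℕ) (h : p ^ 6 ∣ k) : k • x2gen p = 0 := by
  simp [x2gen, Prod.smul_mk, nsmul_eq_mul, (ZMod.natCast_eq_zero_iff _ _).mpr h,
    Prod.ext_iff]
lemma smul_y1 (k : ℕ) (h : p ^ 4 ∣ k) : k • y1gen p = 0 := by
  simp [y1gen, Prod.smul_mk, nsmul_eq_mul, (ZMod.natCast_eq_zero_iff _ _).mpr h,
    Prod.ext_iff]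
lemma smul_y2 (k : ℕ) (h : p ^ 4 ∣ k) : k • y2gen p = 0 := by
  simp [y2gen, Prod.smul_mk, nsmul_eq_mul, (ZMod.natCast_eq_zero_iff _ _).mpr h,
    Prod.ext_iff]
lemma smul_z1 (k : ℕ) (h : p ^ 2 ∣ k) : k • z1gen p = 0 := by
  simp [z1gen, Prod.smul_mk, nsmul_eq_mul, (ZMod.natCast_eq_zero_iff _ _).mpr h,
    Prod.ext_iff]
lemma smul_z2 (k : ℕ) (h : p ^ 2 ∣ k) : k • z2gen p = 0 := by
  simp [z2gen, Prod.smul_mk, nsmul_eq_mul, (ZMod.natCast_eq_zero_iff _ _).mpr h,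
    Prod.ext_iff]

instance A2sub_bounded (l mu : ℕ) : BoundedSub (A2sub p l mu) (p ^ 4) := by
  constructor
  rintro ⟨a, ha⟩
  simp only
  induction ha using AddSubgroup.closure_induction with
  | mem b hb =>
    simp only [Set.mem_insert_iff, Set.mem_singleton_iff] at hb
    rcases hb with rfl | rfl | rfl | rfl
    · rw [u1gen, smul_add, smul_add, smul_add, smul_smul, smul_smul, smul_smul,
        smul_x1 p _ (by rw [← pow_add]), smul_y1 p _ ⟨p, by ring⟩, smul_y2 p _ ⟨p, by ring⟩,
        smul_z2 p _ ⟨p ^ 2, by ring⟩]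
      simp
    · rw [u2gen, smul_add, smul_add, smul_add, smul_add, smul_smul, smul_smul, smul_smul,
        smul_smul, smul_smul, smul_x2 p _ ⟨1, by ring⟩, smul_y1 p _ ⟨p * l, by ring⟩,
        smul_y2 p _ ⟨p * (mu + 1), by ring⟩, smul_z1 p _ ⟨p ^ 2 * l, by ring⟩,
        smul_z2 p _ ⟨p ^ 2 * mu, by ring⟩]
      simp
    · rw [v1gen, smul_add, smul_smul, smul_smul, smul_y1 p _ ⟨p ^ 2, by ring⟩,
        smul_z1 p _ ⟨p ^ 3, by ring⟩]
      simp
    · rw [v2gen, smul_add, smul_smul, smul_smul, smul_y2 p _ ⟨p ^ 2, by ring⟩,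
        smul_z2 p _ ⟨p ^ 3, by ring⟩]
      simp
  | zero => simp
  | add x y hx hy hx' hy' => simp [smul_add, hx', hy']
  | neg x hx hx' => simp [hx']

end

/-! In `G(A ⊆ B)` the centre is `{(0, b, 0)} ≅ B` as soon as `A` has exponent `n`, and the
commutator subgroup is the image of `A` in that centre. So an isomorphism
`G(A ⊆ B) ≅ G(A' ⊆ B)` restricts to an automorphism of `B` carrying `A` onto `A'`, and the
hypothesis on the embeddings identifies the parameters. For the order, `A_{λ,μ} ≅ (ℤ/p⁴)² ⊕ (ℤ/p²)²`
through its four generators: the `x₁`, `x₂`, `y₁`, `y₂` coordinates of a combination determine its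
coefficients, so `|G| = p¹² · p²⁵ · p⁴`. -/

section Transfer

variable {G H : Type*} [Group G] [Group H]

lemma map_center_of_mulEquiv (φ : G ≃* H) :
    (Subgroup.center G).map φ.toMonoidHom = Subgroup.center H := by
  ext h
  rw [Subgroup.mem_map_equiv]
  exact MulEquivClass.apply_mem_center_iff φ.symm

lemma map_commutator_of_mulEquiv (φ : G ≃* H) :
    (commutator G).map φ.toMonoidHom = commutator H := by
  rw [map_commutator_eq, MonoidHom.range_eq_top.mpr φ.surjective, commutator_def]

lemma exists_mulEquiv_apply_eq_of_map_range_eq {M M' : Type*} [Group M] [Group M']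
    {ι : M →* G} {ι' : M' →* H} (hι : Function.Injective ι) (hι' : Function.Injective ι')
    (φ : G ≃* H) (h : ι.range.map φ.toMonoidHom = ι'.range) :
    ∃ f : M ≃* M', ∀ m, ι' (f m) = φ (ι m) :=
  ⟨(MonoidHom.ofInjective hι).trans ((φ.subgroupMap _).trans
      ((MulEquiv.subgroupCongr h).trans (MonoidHom.ofInjective hι').symm)),
    fun _ => MonoidHom.apply_ofInjective_symm hι' _⟩

end Transfer

def zmodHom {n : ℕ} [NeZero n] (u : B) (hu : n • u = 0) : ZMod n →+ B where
  toFun a := a.val • u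
  map_zero' := by rw [ZMod.val_zero, zero_nsmul]
  map_add' a b := by rw [ZMod.val_add, val_smul_eq u hu, add_nsmul]

lemma zmodHom_apply {n : ℕ} [NeZero n] (u : B) (hu : n • u = 0) (a : ZMod n) :
    zmodHom u hu a = a.val • u := rfl

lemma zmodHom_one {n : ℕ} [NeZero n] (u : B) (hu : n • u = 0) : zmodHom u hu 1 = u := by
  rw [zmodHom_apply, ZMod.val_one_eq_one_mod, val_smul_eq u hu, one_nsmul]

lemma eq_zero_of_natCast_val_mul_pow_eq_zero {q k m : ℕ} [NeZero q] (a : ZMod (q ^ k))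
    (h : ((a.val * q ^ m : ℕ) : ZMod (q ^ (k + m))) = 0) : a = 0 := by
  rw [ZMod.natCast_eq_zero_iff, pow_add] at h
  rw [← ZMod.natCast_zmod_val a, ZMod.natCast_eq_zero_iff]
  exact Nat.dvd_of_mul_dvd_mul_right (pow_pos (Nat.pos_of_neZero q) m) h

section Birkhoff

variable (A : AddSubgroup B) (n : ℕ)

lemma one_val_nsmul [BoundedSub A n] (a : A) : (1 : ZMod n).val • (a : B) = a := by
  rw [ZMod.val_one_eq_one_mod, val_smul_eq _ (BoundedSub.bound a), one_nsmul]

variable [NeZero n] [BoundedSub A n]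

lemma mgroup_mul_def (x y : A × B × ZMod n) :
    x * y = (x.1 + y.1, x.2.1 + x.2.2.val • (y.1 : B) + y.2.1, x.2.2 + y.2.2) := rfl

lemma mgroup_inv_def (x : A × B × ZMod n) :
    x⁻¹ = (-x.1, -x.2.1 + x.2.2.val • (x.1 : B), -x.2.2) := rfl

def centralHom : Multiplicative B →* A × B × ZMod n where
  toFun b := (0, b.toAdd, 0)
  map_one' := rfl
  map_mul' b c := by simp [mgroup_mul_def]

lemma centralHom_apply (b : Multiplicative B) : centralHom A n b = (0, b.toAdd, 0) := rfl

lemma centralHom_injective : Function.Injective (centralHom A n) :=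
  fun _ _ h => Multiplicative.toAdd.injective (congrArg (fun z => z.2.1) h)

lemma range_centralHom_le_center :
    (centralHom A n).range ≤ Subgroup.center (A × B × ZMod n) := by
  rintro _ ⟨b, rfl⟩
  rw [Subgroup.mem_center_iff]
  intro g
  simp [centralHom_apply, mgroup_mul_def, add_comm]

lemma center_le_range_centralHom (hA : AddMonoid.exponent A = n) :
    Subgroup.center (A × B × ZMod n) ≤ (centralHom A n).range := by
  intro z hz
  rw [Subgroup.mem_center_iff] at hz
  have h_fst : (z.1 : B) = 0 := by
    have h := congrArg (fun w => w.2.1) (hz (0, 0, 1))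
    simp only [mgroup_mul_def, one_val_nsmul] at h
    simpa using h
  have h_snd : z.2.2 = 0 := by
    have h_ann : ∀ a : A, z.2.2.val • a = 0 := fun a => by
      have h := congrArg (fun w => w.2.1) (hz (a, 0, 0))
      simp only [mgroup_mul_def] at h
      ext
      simpa using h
    have h_dvd := AddMonoid.exponent_dvd_of_forall_nsmul_eq_zero h_ann
    rw [hA] at h_dvd
    rw [← ZMod.val_eq_zero]
    exact Nat.eq_zero_of_dvd_of_lt h_dvd (ZMod.val_lt _)
  exact ⟨Multiplicative.ofAdd z.2.1, Prod.ext (Subtype.ext h_fst.symm) (Prod.ext rfl h_snd.symm)⟩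

lemma range_centralHom_eq_center (hA : AddMonoid.exponent A = n) :
    (centralHom A n).range = Subgroup.center (A × B × ZMod n) :=
  le_antisymm (range_centralHom_le_center A n) (center_le_range_centralHom A n hA)

def abelianQuotientHom : (A × B × ZMod n) →* Multiplicative (A × (B ⧸ A) × ZMod n) where
  toFun z := Multiplicative.ofAdd (z.1, z.2.1, z.2.2)
  map_one' := rfl
  map_mul' x y := by
    have h : ((x.2.2.val • (y.1 : B) : B) : B ⧸ A) = 0 :=
      (QuotientAddGroup.eq_zero_iff _).mpr (A.nsmul_mem y.1.2 _)
    simp [mgroup_mul_def, h, ← ofAdd_add]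

lemma commutator_eq_map_centralHom :
    commutator (A × B × ZMod n) = A.toSubgroup.map (centralHom A n) := by
  apply le_antisymm
  · intro z hz
    have h := Abelianization.commutator_subset_ker (abelianQuotientHom A n) hz
    simp only [MonoidHom.mem_ker, abelianQuotientHom, MonoidHom.coe_mk, OneHom.coe_mk,
      ofAdd_eq_one, Prod.mk_eq_zero, QuotientAddGroup.eq_zero_iff] at h
    obtain ⟨h_fst, h_mem, h_snd⟩ := h
    exact ⟨Multiplicative.ofAdd z.2.1, h_mem, Prod.ext h_fst.symm (Prod.ext rfl h_snd.symm)⟩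
  · rintro _ ⟨b, hb, rfl⟩
    let : Bracket (A × B × ZMod n) (A × B × ZMod n) := commutatorElement
    have h : ⁅((⟨-b.toAdd, neg_mem hb⟩ : A), (0 : B), (0 : ZMod n)), (0, 0, 1)⁆ =
        centralHom A n b := by
      simpa [commutatorElement_def, mgroup_mul_def, mgroup_inv_def, centralHom_apply] using
        one_val_nsmul A n ⟨b.toAdd, hb⟩
    rw [← h, commutator_def]
    exact Subgroup.commutator_mem_commutator (Subgroup.mem_top _) (Subgroup.mem_top _)

lemma commutator_le_center :
    commutator (A × B × ZMod n) ≤ Subgroup.center (A × B × ZMod n) := by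
  rw [commutator_eq_map_centralHom]
  exact (Subgroup.map_le_range _ _).trans (range_centralHom_le_center A n)

end Birkhoff

lemma centralHom_mem_commutator_iff (A : AddSubgroup B) (n : ℕ) [NeZero n] [BoundedSub A n]
    (b : B) : centralHom A n (.ofAdd b) ∈ commutator (A × B × ZMod n) ↔ b ∈ A := by
  rw [commutator_eq_map_centralHom, Subgroup.mem_map_iff_mem (centralHom_injective A n),
    Multiplicative.mem_toSubgroup, toAdd_ofAdd]

theorem exists_addEquiv_map_eq_of_mulEquiv {A A' : AddSubgroup B} {n : ℕ} [NeZero n]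
    [BoundedSub A n] [BoundedSub A' n] (hA : AddMonoid.exponent A = n)
    (hA' : AddMonoid.exponent A' = n) (φ : (A × B × ZMod n) ≃* (A' × B × ZMod n)) :
    ∃ f : B ≃+ B, A.map f.toAddMonoidHom = A' := by
  obtain ⟨f, hf⟩ := exists_mulEquiv_apply_eq_of_map_range_eq (centralHom_injective A n)
    (centralHom_injective A' n) φ (by
      rw [range_centralHom_eq_center A n hA, range_centralHom_eq_center A' n hA',
        map_center_of_mulEquiv])
  let g : B ≃+ B := AddEquiv.toMultiplicative.symm f
  have h_mem_iff (b : B) : b ∈ A ↔ g b ∈ A' := by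
    have h_ofAdd : Multiplicative.ofAdd (g b) = f (.ofAdd b) := rfl
    rw [← centralHom_mem_commutator_iff A n, ← centralHom_mem_commutator_iff A' n, h_ofAdd, hf,
      ← map_commutator_of_mulEquiv φ, Subgroup.mem_map_equiv, φ.symm_apply_apply]
  refine ⟨g, ?_⟩
  ext c
  rw [AddSubgroup.mem_map_equiv, h_mem_iff, g.apply_symm_apply]

lemma nsmul_gens_eq (p l mu a b c d : ℕ) :
    a • u1gen p + (b • u2gen p l mu + (c • v1gen p + d • v2gen p)) =
      (((a * p ^ 3 : ℕ) : ZMod (p ^ 7)), ((b * p ^ 2 : ℕ) : ZMod (p ^ 6)),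
       ((a * p + b * (p * l) + c * p ^ 2 : ℕ) : ZMod (p ^ 4)),
       ((a * p + b * (p * (mu + 1)) + d * p ^ 2 : ℕ) : ZMod (p ^ 4)),
       ((b * l + c * p : ℕ) : ZMod (p ^ 2)),
       ((a + b * mu + d * p : ℕ) : ZMod (p ^ 2))) := by
  simp only [u1gen, u2gen, v1gen, v2gen, x1gen, x2gen, y1gen, y2gen, z1gen, z2gen,
    Prod.smul_mk, Prod.mk_add_mk, smul_zero, add_zero, zero_add,
    Prod.mk.injEq, nsmul_eq_mul]
  refine ⟨?_, ?_, ?_, ?_, ?_, ?_⟩ <;> push_cast <;> ring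

lemma card_Bd (p : ℕ) : Nat.card (Bd p) = p ^ 25 := by
  simp only [Bd, Nat.card_prod, Nat.card_zmod]
  ring

section TwoParameterFamily

variable (p : ℕ) [Fact p.Prime]

lemma nsmul_eq_zero_of_mem_A2sub {l mu : ℕ} {b : Bd p} (hb : b ∈ A2sub p l mu) :
    p ^ 4 • b = 0 :=
  BoundedSub.bound (⟨b, hb⟩ : A2sub p l mu)

lemma pow_two_nsmul_v1gen : p ^ 2 • v1gen p = 0 := by
  rw [v1gen, smul_add, smul_smul, smul_smul, smul_y1 p _ ⟨1, by ring⟩,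
    smul_z1 p _ ⟨p, by ring⟩, add_zero]

lemma pow_two_nsmul_v2gen : p ^ 2 • v2gen p = 0 := by
  rw [v2gen, smul_add, smul_smul, smul_smul, smul_y2 p _ ⟨1, by ring⟩,
    smul_z2 p _ ⟨p, by ring⟩, add_zero]

def genHom (l mu : ℕ) : ZMod (p ^ 4) × ZMod (p ^ 4) × ZMod (p ^ 2) × ZMod (p ^ 2) →+ Bd p :=
  (zmodHom (u1gen p) (nsmul_eq_zero_of_mem_A2sub p (l := l) (mu := mu)
    (AddSubgroup.subset_closure (by simp)))).coprod <|
  (zmodHom (u2gen p l mu) (nsmul_eq_zero_of_mem_A2sub p (l := l) (mu := mu)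
    (AddSubgroup.subset_closure (by simp)))).coprod <|
  (zmodHom (v1gen p) (pow_two_nsmul_v1gen p)).coprod (zmodHom (v2gen p) (pow_two_nsmul_v2gen p))

lemma genHom_apply (l mu : ℕ) (w : ZMod (p ^ 4) × ZMod (p ^ 4) × ZMod (p ^ 2) × ZMod (p ^ 2)) :
    genHom p l mu w = w.1.val • u1gen p + (w.2.1.val • u2gen p l mu +
      (w.2.2.1.val • v1gen p + w.2.2.2.val • v2gen p)) := rfl

lemma genHom_injective (l mu : ℕ) : Function.Injective (genHom p l mu) := by
  rw [injective_iff_map_eq_zero]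
  rintro ⟨a, b, c, d⟩ h
  rw [genHom_apply, nsmul_gens_eq] at h
  simp only [Prod.mk_eq_zero] at h
  obtain ⟨h_x1, h_x2, h_y1, h_y2, -, -⟩ := h
  obtain rfl : a = 0 := eq_zero_of_natCast_val_mul_pow_eq_zero (k := 4) (m := 3) a h_x1
  obtain rfl : b = 0 := eq_zero_of_natCast_val_mul_pow_eq_zero (k := 4) (m := 2) b h_x2
  simp only [ZMod.val_zero, zero_mul, zero_add] at h_y1 h_y2
  obtain rfl : c = 0 := eq_zero_of_natCast_val_mul_pow_eq_zero (k := 2) (m := 2) c h_y1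
  obtain rfl : d = 0 := eq_zero_of_natCast_val_mul_pow_eq_zero (k := 2) (m := 2) d h_y2
  rfl

lemma range_genHom (l mu : ℕ) : (genHom p l mu).range = A2sub p l mu := by
  apply le_antisymm
  · rintro _ ⟨w, rfl⟩
    have mem (b : Bd p) (hb : b ∈ ({u1gen p, u2gen p l mu, v1gen p, v2gen p} : Set (Bd p))) :
        b ∈ A2sub p l mu := AddSubgroup.subset_closure hb
    rw [genHom_apply]
    refine add_mem (nsmul_mem (mem _ ?_) _) (add_mem (nsmul_mem (mem _ ?_) _)
      (add_mem (nsmul_mem (mem _ ?_) _) (nsmul_mem (mem _ ?_) _))) <;> simp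
  · rw [A2sub, AddSubgroup.closure_le]
    rintro g (rfl | rfl | rfl | rfl)
    · exact ⟨(1, 0, 0, 0), by simp [genHom, zmodHom_one]⟩
    · exact ⟨(0, 1, 0, 0), by simp [genHom, zmodHom_one]⟩
    · exact ⟨(0, 0, 1, 0), by simp [genHom, zmodHom_one]⟩
    · exact ⟨(0, 0, 0, 1), by simp [genHom, zmodHom_one]⟩

lemma card_A2sub (l mu : ℕ) : Nat.card (A2sub p l mu) = p ^ 12 := by
  rw [← range_genHom p l mu,
    ← Nat.card_congr (AddMonoidHom.ofInjective (genHom_injective p l mu)).toEquiv]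
  simp only [Nat.card_prod, Nat.card_zmod]
  ring

lemma addOrderOf_u1gen : addOrderOf (u1gen p) = p ^ 4 := by
  have h := addOrderOf_injective (genHom p 0 0) (genHom_injective p 0 0) (1, 0, 0, 0)
  simpa [genHom, zmodHom_one, Prod.addOrderOf_mk] using h

lemma exponent_A2sub (l mu : ℕ) : AddMonoid.exponent (A2sub p l mu) = p ^ 4 := by
  apply Nat.dvd_antisymm
  · exact AddMonoid.exponent_dvd_of_forall_nsmul_eq_zero fun a => Subtype.ext (BoundedSub.bound a)
  · have h_mem : u1gen p ∈ A2sub p l mu := AddSubgroup.subset_closure (by simp)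
    calc p ^ 4 = addOrderOf (⟨u1gen p, h_mem⟩ : A2sub p l mu) := by
          rw [AddSubgroup.addOrderOf_mk, addOrderOf_u1gen p]
      _ ∣ AddMonoid.exponent (A2sub p l mu) := AddMonoid.addOrder_dvd_exponent _

end TwoParameterFamily

/-- If the embeddings `(A_{λ,μ} ⊆ B)`, `(λ,μ) ∈ {0,…,p-1}²`, are pairwise nonisomorphic as
subgroup embeddings, then the groups `G(A_{λ,μ} ⊆ B)` form a family of `p²` pairwise
nonisomorphic metabelian groups of order `p⁴¹`. -/
theorem two_parameter_family (p : ℕ) [Fact p.Prime]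
    (hemb : ∀ l mu l' mu' : ℕ, l < p → mu < p → l' < p → mu' < p →
      (∃ f : Bd p ≃+ Bd p, (A2sub p l mu).map f.toAddMonoidHom = A2sub p l' mu') →
      l = l' ∧ mu = mu') :
    (∀ l mu l' mu' : ℕ, l < p → mu < p → l' < p → mu' < p →
      Nonempty ((A2sub p l mu × Bd p × ZMod (p ^ 4)) ≃*
        (A2sub p l' mu' × Bd p × ZMod (p ^ 4))) → l = l' ∧ mu = mu') ∧
    (∀ l mu : ℕ, l < p → mu < p →
      Nat.card (A2sub p l mu × Bd p × ZMod (p ^ 4)) = p ^ 41 ∧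
      commutator (A2sub p l mu × Bd p × ZMod (p ^ 4)) ≤
        Subgroup.center (A2sub p l mu × Bd p × ZMod (p ^ 4))) := by
  refine ⟨fun l mu l' mu' hl hmu hl' hmu' ⟨φ⟩ => hemb l mu l' mu' hl hmu hl' hmu'
      (exists_addEquiv_map_eq_of_mulEquiv (exponent_A2sub p l mu) (exponent_A2sub p l' mu') φ),
    fun l mu _ _ => ⟨?_, commutator_le_center _ _⟩⟩
  rw [Nat.card_prod, Nat.card_prod, card_A2sub, card_Bd, Nat.card_zmod]
  ring
end Metabelian
end

section
/- If B has exponent p^n and A ≤ B has exponent p^m, then the group G(A ⊆ B) has exponent p^max(n,m) when p is odd, and the exponent of its commutator subgroup equals p^m. -/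
theorem Odd.dvd_choose_two {q : ℕ} (hq : Odd q) : q ∣ q.choose 2 := by
  rw [Nat.choose_two_right, Nat.mul_div_assoc q (Nat.Odd.sub_odd hq odd_one).two_dvd]
  exact dvd_mul_right q _

theorem Nat.lcm_pow_pow (p n m : ℕ) : Nat.lcm (p ^ n) (p ^ m) = p ^ max n m := by
  rcases le_total n m with h | h
  · rw [max_eq_right h, Nat.lcm_eq_right_iff_dvd]
    exact pow_dvd_pow p h
  · rw [max_eq_left h, Nat.lcm_comm, Nat.lcm_eq_right_iff_dvd]
    exact pow_dvd_pow p h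

namespace Metabelian

open scoped commutatorElement

variable {B : Type*} [AddCommGroup B] {A : AddSubgroup B} {N : ℕ} [BoundedSub A N]

lemma nsmul_coe_eq_zero_of_dvd (a : A) {k : ℕ} (hk : N ∣ k) : k • (a : B) = 0 := by
  obtain ⟨c, rfl⟩ := hk
  rw [mul_nsmul, BoundedSub.bound (n := N) a, nsmul_zero]

lemma val_nsmul_smul (k : ℕ) (d : ZMod N) (a : A) :
    (k • d).val • (a : B) = (k * d.val) • (a : B) := by
  rw [nsmul_eq_mul, ZMod.val_mul, ZMod.val_natCast, Nat.mod_mul_mod,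
    val_smul_eq _ (BoundedSub.bound a)]

variable [NeZero N]

lemma mul_def (x y : A × B × ZMod N) :
    x * y = (x.1 + y.1, x.2.1 + x.2.2.val • (y.1 : B) + y.2.1, x.2.2 + y.2.2) := rfl

lemma one_def : (1 : A × B × ZMod N) = (0, 0, 0) := rfl

lemma inv_def (x : A × B × ZMod N) :
    x⁻¹ = (-x.1, -x.2.1 + x.2.2.val • (x.1 : B), -x.2.2) := rfl

lemma pow_def (x : A × B × ZMod N) (k : ℕ) :
    x ^ k = (k • x.1, k • x.2.1 + (k.choose 2 * x.2.2.val) • (x.1 : B), k • x.2.2) := by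
  induction k with
  | zero => simp [one_def]
  | succ k ih =>
    rw [pow_succ, ih, mul_def, val_nsmul_smul, Nat.choose_succ_succ', Nat.choose_one_right]
    refine Prod.ext (succ_nsmul _ _).symm (Prod.ext ?_ (succ_nsmul _ _).symm)
    simp only [Nat.add_mul, add_nsmul, succ_nsmul]
    abel

variable (A N) in
def incl : Multiplicative B →* A × B × ZMod N where
  toFun b := (0, b.toAdd, 0)
  map_one' := rfl
  map_mul' b c := by simp [mul_def]

lemma incl_injective : Function.Injective (incl A N) :=
  fun _ _ h => congrArg (fun x => x.2.1) h

variable (A N) in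
def projZMod : A × B × ZMod N →* Multiplicative (ZMod N) where
  toFun x := .ofAdd x.2.2
  map_one' := rfl
  map_mul' _ _ := rfl

lemma projZMod_surjective : Function.Surjective (projZMod A N) :=
  fun d => ⟨(0, 0, d.toAdd), rfl⟩

variable (A N) in
def toAbelian : A × B × ZMod N →* Multiplicative (A × (B ⧸ A) × ZMod N) where
  toFun x := .ofAdd (x.1, x.2.1, x.2.2)
  map_one' := rfl
  map_mul' x y := by
    simp only [mul_def, ← ofAdd_add, Prod.mk_add_mk, QuotientAddGroup.mk_add,
      (QuotientAddGroup.eq_zero_iff _).2 (A.nsmul_mem y.1.2 _), add_zero]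

lemma eq_incl_of_mem_ker {x : A × B × ZMod N} (hx : x ∈ (toAbelian A N).ker) :
    x.2.1 ∈ A ∧ x = incl A N (.ofAdd x.2.1) := by
  simp only [MonoidHom.mem_ker, toAbelian, MonoidHom.coe_mk, OneHom.coe_mk, ofAdd_eq_one,
    Prod.mk_eq_zero, QuotientAddGroup.eq_zero_iff] at hx
  obtain ⟨ha, hb, hd⟩ := hx
  exact ⟨hb, Prod.ext ha (Prod.ext rfl hd)⟩

lemma commutatorElement_eq_incl (a : A) :
    ⁅((0, 0, 1) : A × B × ZMod N), ((a, 0, 0) : A × B × ZMod N)⁆ = incl A N (.ofAdd a) := by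
  have h1 : (1 : ZMod N).val • (a : B) = a := by
    rw [ZMod.val_one_eq_one_mod, val_smul_eq _ (BoundedSub.bound a), one_nsmul]
  simp [commutatorElement_def, mul_def, inv_def, incl, h1]

lemma exponent_dvd_of_dvd {q : ℕ} (hN : N ∣ q) (hN2 : N ∣ q.choose 2)
    (hB : AddMonoid.exponent B ∣ q) : Monoid.exponent (A × B × ZMod N) ∣ q := by
  refine Monoid.exponent_dvd_of_forall_pow_eq_one fun x => ?_
  rw [pow_def, one_def, AddMonoid.exponent_dvd_iff_forall_nsmul_eq_zero.1 hB,
    nsmul_coe_eq_zero_of_dvd _ (hN2.mul_right _), nsmul_eq_mul,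
    (ZMod.natCast_eq_zero_iff _ _).2 hN, zero_mul, add_zero]
  exact Prod.ext (Subtype.ext (nsmul_coe_eq_zero_of_dvd _ hN)) rfl

lemma addExponent_dvd_exponent : AddMonoid.exponent B ∣ Monoid.exponent (A × B × ZMod N) := by
  rw [← Monoid.exponent_multiplicative]
  exact Monoid.exponent_dvd_of_monoidHom (incl A N) incl_injective

lemma modulus_dvd_exponent : N ∣ Monoid.exponent (A × B × ZMod N) := by
  have h := MonoidHom.exponent_dvd (f := projZMod A N) projZMod_surjective
  rwa [Monoid.exponent_multiplicative, ZMod.exponent] at h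

theorem exponent_eq_lcm (hN : Odd N) (hB : Odd (AddMonoid.exponent B)) :
    Monoid.exponent (A × B × ZMod N) = Nat.lcm (AddMonoid.exponent B) N := by
  have hodd : Odd (Nat.lcm (AddMonoid.exponent B) N) :=
    Odd.of_dvd_nat (hB.mul hN) (Nat.lcm_dvd_mul _ _)
  refine Nat.dvd_antisymm ?_ (Nat.lcm_dvd addExponent_dvd_exponent modulus_dvd_exponent)
  exact exponent_dvd_of_dvd (Nat.dvd_lcm_right _ _)
    ((Nat.dvd_lcm_right _ _).trans hodd.dvd_choose_two) (Nat.dvd_lcm_left _ _)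

lemma incl_mem_commutator {b : B} (hb : b ∈ A) :
    incl A N (.ofAdd b) ∈ commutator (A × B × ZMod N) :=
  commutatorElement_eq_incl (N := N) ⟨b, hb⟩ ▸
    Subgroup.commutator_mem_commutator (Subgroup.mem_top _) (Subgroup.mem_top _)

theorem exponent_commutator :
    Monoid.exponent (commutator (A × B × ZMod N)) = AddMonoid.exponent A := by
  refine Nat.dvd_antisymm ?_ ?_
  · refine Monoid.exponent_dvd_of_forall_pow_eq_one fun x => Subtype.ext ?_
    obtain ⟨hA, hx⟩ :=
      eq_incl_of_mem_ker (Abelianization.commutator_subset_ker (toAbelian A N) x.2)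
    have h0 : AddMonoid.exponent A • (x : A × B × ZMod N).2.1 = 0 :=
      congrArg Subtype.val (AddMonoid.exponent_nsmul_eq_zero (⟨_, hA⟩ : A))
    rw [SubmonoidClass.coe_pow, hx, ← map_pow, ← ofAdd_nsmul, h0, ofAdd_zero, map_one]
    rfl
  · rw [← Monoid.exponent_multiplicative]
    exact Monoid.exponent_dvd_of_monoidHom
      (((incl A N).comp (AddMonoidHom.toMultiplicative A.subtype)).codRestrict _
        fun a => incl_mem_commutator a.toAdd.2)
      fun a b h => Subtype.val_injective (incl_injective (congrArg Subtype.val h))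

theorem exponent_of_construction_general (p n m : ℕ) [Fact p.Prime] (hodd : Odd p) {B : Type*}
    [AddCommGroup B] (A : AddSubgroup B) [BoundedSub A (p ^ m)]
    (hexpB : AddMonoid.exponent B = p ^ n) (hexpA : AddMonoid.exponent A = p ^ m) :
    Monoid.exponent (A × B × ZMod (p ^ m)) = p ^ max n m ∧
    Monoid.exponent (commutator (A × B × ZMod (p ^ m))) = p ^ m := by
  refine ⟨?_, exponent_commutator.trans hexpA⟩
  rw [exponent_eq_lcm hodd.pow (hexpB ▸ hodd.pow), hexpB, Nat.lcm_pow_pow]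

/-- If `B` has exponent `p^n` and `A ≤ B` has exponent `p^m`, then for odd `p` the group
`G(A ⊆ B)` has exponent `p^max(n,m)`, and the exponent of its commutator subgroup is
`p^m`. -/
theorem exponent_of_construction (p n m : ℕ) [Fact p.Prime] (hodd : Odd p) {B : Type*}
    [AddCommGroup B] [Finite B] (hpB : ∀ b : B, ∃ k : ℕ, p ^ k • b = 0)
    (A : AddSubgroup B) [BoundedSub A (p ^ m)]
    (hexpB : AddMonoid.exponent B = p ^ n) (hexpA : AddMonoid.exponent A = p ^ m) :
    Monoid.exponent (A × B × ZMod (p ^ m)) = p ^ max n m ∧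
    Monoid.exponent (commutator (A × B × ZMod (p ^ m))) = p ^ m :=
  exponent_of_construction_general p n m hodd A hexpB hexpA

end Metabelian
end
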